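/- Let M = k^d for some k ∈ ℕ, let 0 < η₁ < η₂, and let η = αη₁ + βη₂ be a convex combination (α, β ≥ 0, α + β = 1). Set N₁ = (η₁/η)N, N₂ = (η₂/η)N, b(M) = ⌊βM⌋/M and a(M) = 1 − b(M). Then for every real N ≥ 1: f_N(η) ≤ a(M) f_{N₁/M}(η₁) + b(M) f_{N₂/M}(η₂). -/

import Mathlib

open MeasureTheory Filter Set
open scoped ENNReal NNReal

noncomputable section

abbrev Rd (d : ℕ) := Fin d → ℝ

/-- `nrm` is a norm on `ℝ^d`. -/
def IsNorm {d : ℕ} (nrm : Rd d → ℝ) : Prop :=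
  (∀ x, 0 ≤ nrm x) ∧ (∀ x, nrm x = 0 ↔ x = 0) ∧
  (∀ (c : ℝ) (x : Rd d), nrm (c • x) = |c| * nrm x) ∧
  (∀ x y, nrm (x + y) ≤ nrm x + nrm y)

/-- The standing assumptions on `φ`: increasing, nonnegative, left continuous,
`lim_{t↓0} φ(t) = 0`, and not identically zero on `[0,∞)`. -/
def PhiOK (φ : ℝ → ℝ) : Prop :=
  MonotoneOn φ (Ici 0) ∧ (∀ t, 0 ≤ t → 0 ≤ φ t) ∧
  (∀ t, 0 < t → Tendsto φ (nhdsWithin t (Iio t)) (nhds (φ t))) ∧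
  Tendsto φ (nhdsWithin 0 (Ioi 0)) (nhds 0) ∧
  (∃ t, 0 ≤ t ∧ φ t ≠ 0)

/-- distance from a point to a set, `d(x,A) = inf_{y ∈ A} ‖x - y‖`. -/
def dSet {d : ℕ} (nrm : Rd d → ℝ) (x : Rd d) (A : Set (Rd d)) : ℝ :=
  sInf ((fun y => nrm (x - y)) '' A)

/-- the unit cube `[0,1)^d`. -/
def unitCube (d : ℕ) : Set (Rd d) := univ.pi fun _ => Ico (0:ℝ) 1

/-- `f_N(η) = inf_C E[φ((N/η)^{1/d} d(U,C))]`, infimum over nonempty codebooks of at most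
`⌊N⌋` points, `U` uniform on `[0,1)^d`; it is `∞` for `N < 1` (empty infimum). -/
def fNq {d : ℕ} (nrm : Rd d → ℝ) (φ : ℝ → ℝ) (N η : ℝ) : ℝ≥0∞ :=
  ⨅ (C : Finset (Rd d)) (_ : C.Nonempty) (_ : (C.card : ℝ) ≤ N),
    ∫⁻ x in unitCube d, ENNReal.ofReal (φ ((N / η) ^ (1 / (d:ℝ)) * dSet nrm x (C : Set (Rd d)))) ∂volume

/-- `g(η) = inf_{N ≥ 1} f_N(η)` for `η > 0`, extended by `g(0) = lim_{η↓0} g(η) = sup_{η>0} g(η)`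
for `η ≤ 0`. -/
def gq {d : ℕ} (nrm : Rd d → ℝ) (φ : ℝ → ℝ) (η : ℝ) : ℝ≥0∞ :=
  if 0 < η then ⨅ N ∈ Ici (1:ℝ), fNq nrm φ N η
  else ⨆ η' ∈ Ioi (0:ℝ), ⨅ N ∈ Ici (1:ℝ), fNq nrm φ N η'

/-- the absolutely continuous part `μ_c` of `μ` with respect to Lebesgue measure. -/
def muc {d : ℕ} (μ : Measure (Rd d)) : Measure (Rd d) :=
  volume.withDensity (μ.rnDeriv volume)

/-- Orlicz norm `‖F(X)‖_φ = inf{t > 0 : E[φ(F(X)/t)] ≤ 1}` (as the `sInf` in `ℝ≥0∞`,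
so it is `∞` when no such `t` exists), where `X` has law `μ`. -/
def orliczN {d : ℕ} (φ : ℝ → ℝ) (μ : Measure (Rd d)) (F : Rd d → ℝ) : ℝ≥0∞ :=
  sInf {s : ℝ≥0∞ | ∃ t : ℝ, 0 < t ∧ s = ENNReal.ofReal t ∧
    ∫⁻ x, ENNReal.ofReal (φ (F x / t)) ∂μ ≤ 1}

/-- the quantization error `δ(N|X,φ)`, where `X` has law `μ`. -/
def quantErr {d : ℕ} (nrm : Rd d → ℝ) (φ : ℝ → ℝ) (μ : Measure (Rd d)) (N : ℝ) : ℝ≥0∞ :=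
  ⨅ (C : Finset (Rd d)) (_ : C.Nonempty) (_ : (C.card : ℝ) ≤ N),
    orliczN φ μ (fun x => dSet nrm x (C : Set (Rd d)))

/-- `I`, the value of the point allocation problem. -/
def pav {d : ℕ} (nrm : Rd d → ℝ) (φ : ℝ → ℝ) (μ : Measure (Rd d)) : ℝ≥0∞ :=
  ⨅ (ξ : Rd d → ℝ) (_ : ∀ x, 0 ≤ ξ x) (_ : Integrable ξ volume)
    (_ : ∫⁻ x, gq nrm φ (ξ x) ∂(muc μ) ≤ 1),
    ENNReal.ofReal (∫ x, ξ x)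

/-- `ḡ(a) = inf_{η>0} [g(η) + aη]`. -/
def gbarq {d : ℕ} (nrm : Rd d → ℝ) (φ : ℝ → ℝ) (a : ℝ≥0∞) : ℝ≥0∞ :=
  ⨅ η ∈ Ioi (0:ℝ), (gq nrm φ η + a * ENNReal.ofReal η)


/-!
Cut `[0,1)^d` into `M = k^d` subcubes of side `1/k`. A rescaled copy of a codebook `C₂` for
`(N₂/M, η₂)` in `m = ⌊βM⌋` of them and a copy of a codebook `C₁` for `(N₁/M, η₁)` in the others
form a codebook for `(N, η)`: it has at most `m N₂/M + (M - m) N₁/M ≤ N` points because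
`m η₂ + (M - m) η₁ ≤ M η`. The rescaling shrinks distances by `1/k`, which is exactly the change
of scale from `(N/η)^{1/d}` to `(N/(ηM))^{1/d} = (Nᵢ/(M ηᵢ))^{1/d}`, and each subcube carries
`1/M` of the volume, so the cost of the combined codebook is at most `(M - m)/M` times that of
`C₁` plus `m/M` times that of `C₂`.
-/

/-- Since `0 * ⊤ = 0`, a vanishing weight kills its infimum even over an empty index set; hence
only the points on the side of a nonzero weight have to be admissible. -/
theorem ENNReal.le_mul_biInf_add_mul_biInf {ι : Type*} [Nonempty ι] {P Q : ι → Prop}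
    {u v : ι → ℝ≥0∞} {L a b : ℝ≥0∞} (ha : a ≠ ∞) (hb : b ≠ ∞)
    (h : ∀ x y, (a ≠ 0 → P x) → (b ≠ 0 → Q y) → L ≤ a * u x + b * v y) :
    L ≤ a * (⨅ (x) (_ : P x), u x) + b * ⨅ (y) (_ : Q y), v y := by
  have mul_biInf : ∀ {c : ℝ≥0∞} {R : ι → Prop} {w : ι → ℝ≥0∞}, c ≠ ∞ →
      c * (⨅ (x) (_ : R x), w x) = ⨅ (x) (_ : c ≠ 0 → R x), c * w x := by
    intro c R w hc
    rcases eq_or_ne c 0 with rfl | hc0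
    · simp
    · simp [hc0, ENNReal.mul_iInf_of_ne hc0 hc]
  simp only [mul_biInf ha, mul_biInf hb, ENNReal.iInf_add, ENNReal.add_iInf, le_iInf_iff]
  exact fun y hy x hx => h x y hx hy

theorem setLIntegral_image_smul_add {E : Type*} [NormedAddCommGroup E] [NormedSpace ℝ E]
    [FiniteDimensional ℝ E] [MeasurableSpace E] [BorelSpace E] (μ : Measure E)
    [μ.IsAddHaarMeasure] {r : ℝ} (hr : r ≠ 0) (b : E) {s : Set E} (hs : MeasurableSet s)
    (g : E → ℝ≥0∞) :
    ∫⁻ x in (fun y => r • y + b) '' s, g x ∂μ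
      = ENNReal.ofReal (|r| ^ Module.finrank ℝ E) * ∫⁻ y in s, g (r • y + b) ∂μ := by
  have hderiv : ∀ y ∈ s, HasFDerivWithinAt (fun y => r • y + b)
      (r • ContinuousLinearMap.id ℝ E) s y := fun y _ =>
    (((hasFDerivAt_id y).const_smul r).add_const b).hasFDerivWithinAt
  have hinj : InjOn (fun y => r • y + b) s := fun y _ z _ h => by
    simpa [hr] using h
  rw [lintegral_image_eq_lintegral_abs_det_fderiv_mul μ hs hderiv hinj, lintegral_const_mul']
  · rw [ContinuousLinearMap.det, ContinuousLinearMap.toLinearMap_smul,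
      ContinuousLinearMap.coe_id, LinearMap.det_smul, LinearMap.det_id, mul_one, abs_pow]
  · exact ENNReal.ofReal_ne_top

theorem Finset.sum_ite_mem_const {ι M : Type*} [Fintype ι] [DecidableEq ι] [AddCommMonoid M]
    (S : Finset ι) (x y : M) :
    ∑ j, (if j ∈ S then x else y) = (Fintype.card ι - S.card) • y + S.card • x := by
  rw [Finset.sum_ite, Finset.sum_const, Finset.sum_const, add_comm]
  simp [Finset.filter_not, Finset.card_univ_sdiff]

section Quantization

variable {d : ℕ} {nrm : Rd d → ℝ} {φ : ℝ → ℝ}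

theorem dSet_nonneg (hnrm : IsNorm nrm) (x : Rd d) (A : Set (Rd d)) : 0 ≤ dSet nrm x A :=
  Real.sInf_nonneg (by rintro _ ⟨y, -, rfl⟩; exact hnrm.1 _)

theorem dSet_le_dSet_of_subset (hnrm : IsNorm nrm) (x : Rd d) {A B : Set (Rd d)} (hAB : A ⊆ B)
    (hA : A.Nonempty) : dSet nrm x B ≤ dSet nrm x A :=
  csInf_le_csInf ⟨0, by rintro _ ⟨y, -, rfl⟩; exact hnrm.1 _⟩ (hA.image _) (image_mono hAB)

open scoped Pointwise in
theorem dSet_smul_add_image (hnrm : IsNorm nrm) {r : ℝ} (hr : 0 ≤ r) (b x : Rd d)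
    (A : Set (Rd d)) :
    dSet nrm (r • x + b) ((fun z => r • z + b) '' A) = r * dSet nrm x A := by
  have hdist : (fun w => nrm (r • x + b - w)) '' ((fun z => r • z + b) '' A)
      = r • (fun z => nrm (x - z)) '' A := by
    rw [image_image, ← image_smul, image_image]
    refine image_congr fun z _ => ?_
    rw [add_sub_add_right_eq_sub, ← smul_sub, hnrm.2.2.1, abs_of_nonneg hr, smul_eq_mul]
  rw [dSet, hdist, Real.sInf_smul_of_nonneg hr, smul_eq_mul, dSet]

theorem measurableSet_unitCube : MeasurableSet (unitCube d) :=
  MeasurableSet.univ_pi fun _ => measurableSet_Ico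

def subcubeMap (k : ℕ) (j : Fin d → Fin k) : Rd d → Rd d :=
  fun y => (k : ℝ)⁻¹ • y + (k : ℝ)⁻¹ • fun i => (j i : ℝ)

theorem unitCube_subset_iUnion_image_subcubeMap {k : ℕ} (hk : 0 < k) :
    unitCube d ⊆ ⋃ j, subcubeMap k j '' unitCube d := by
  intro x hx
  have hx : ∀ i, 0 ≤ x i ∧ x i < 1 := fun i => hx i (mem_univ i)
  have hk' : (0 : ℝ) < k := Nat.cast_pos.mpr hk
  have hkx : ∀ i, 0 ≤ k * x i := fun i => mul_nonneg hk'.le (hx i).1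
  have hfloor : ∀ i, ⌊k * x i⌋₊ < k := fun i =>
    (Nat.floor_lt (hkx i)).mpr (by nlinarith [(hx i).2])
  refine mem_iUnion.mpr ⟨fun i => ⟨⌊k * x i⌋₊, hfloor i⟩,
    fun i => k * x i - ⌊k * x i⌋₊, fun i _ => ?_, ?_⟩
  · exact ⟨sub_nonneg.mpr (Nat.floor_le (hkx i)),
      by linarith [Nat.lt_floor_add_one (k * x i)]⟩
  · ext i
    simp only [subcubeMap, Pi.add_apply, Pi.smul_apply, smul_eq_mul]
    field_simp
    ring

def quantCost (nrm : Rd d → ℝ) (φ : ℝ → ℝ) (c : ℝ) (C : Finset (Rd d)) : ℝ≥0∞ :=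
  ∫⁻ x in unitCube d, ENNReal.ofReal (φ (c * dSet nrm x C))

theorem fNq_eq_biInf (nrm : Rd d → ℝ) (φ : ℝ → ℝ) (N η : ℝ) :
    fNq nrm φ N η = ⨅ (C : Finset (Rd d)) (_ : C.Nonempty ∧ (C.card : ℝ) ≤ N),
      quantCost nrm φ ((N / η) ^ (1 / (d : ℝ))) C := by
  simp only [fNq, quantCost, iInf_and]

theorem quantCost_biUnion_subcubeMap_le (hnrm : IsNorm nrm) (hφ : MonotoneOn φ (Ici 0))
    {k : ℕ} (hk : 0 < k) {c : ℝ} (hc : 0 ≤ c)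
    (D : (Fin d → Fin k) → Finset (Rd d)) (hD : ∀ j, (D j).Nonempty) :
    quantCost nrm φ c (Finset.univ.biUnion fun j => (D j).image (subcubeMap k j))
      ≤ ((k : ℝ≥0∞) ^ d)⁻¹ * ∑ j, quantCost nrm φ (c / k) (D j) := by
  set C := Finset.univ.biUnion fun j => (D j).image (subcubeMap k j)
  have hk' : (0 : ℝ) < k := Nat.cast_pos.mpr hk
  have hpiece : ∀ j x, ENNReal.ofReal (φ (c * dSet nrm x C))
      ≤ ENNReal.ofReal (φ (c * dSet nrm x (subcubeMap k j '' D j))) := fun j x => by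
    have hsub : subcubeMap k j '' D j ⊆ C := by
      rw [← Finset.coe_image]
      exact Finset.coe_subset.mpr (Finset.subset_biUnion_of_mem
        (fun j => (D j).image (subcubeMap k j)) (Finset.mem_univ j))
    refine ENNReal.ofReal_le_ofReal (hφ (mul_nonneg hc (dSet_nonneg hnrm _ _))
      (mul_nonneg hc (dSet_nonneg hnrm _ _)) ?_)
    exact mul_le_mul_of_nonneg_left
      (dSet_le_dSet_of_subset hnrm x hsub ((Finset.coe_nonempty.mpr (hD j)).image _)) hc
  have hrescale : ∀ j, ∫⁻ x in subcubeMap k j '' unitCube d,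
      ENNReal.ofReal (φ (c * dSet nrm x (subcubeMap k j '' D j)))
        = ((k : ℝ≥0∞) ^ d)⁻¹ * quantCost nrm φ (c / k) (D j) := fun j => by
    unfold subcubeMap
    rw [setLIntegral_image_smul_add volume (inv_ne_zero hk'.ne') _
      measurableSet_unitCube, Module.finrank_fin_fun]
    simp only [dSet_smul_add_image hnrm (inv_nonneg.mpr hk'.le), ← mul_assoc, ← div_eq_mul_inv]
    rw [abs_inv, abs_of_pos hk', inv_pow, ENNReal.ofReal_inv_of_pos (by positivity),
      ENNReal.ofReal_pow hk'.le, ENNReal.ofReal_natCast, quantCost]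
  calc quantCost nrm φ c C
      ≤ ∫⁻ x in ⋃ j, subcubeMap k j '' unitCube d, ENNReal.ofReal (φ (c * dSet nrm x C)) :=
        lintegral_mono_set (unitCube_subset_iUnion_image_subcubeMap hk)
    _ ≤ ∑ j, ∫⁻ x in subcubeMap k j '' unitCube d, ENNReal.ofReal (φ (c * dSet nrm x C)) :=
        (lintegral_iUnion_le _ _).trans_eq (tsum_fintype _)
    _ ≤ ∑ j, ∫⁻ x in subcubeMap k j '' unitCube d,
          ENNReal.ofReal (φ (c * dSet nrm x (subcubeMap k j '' D j))) :=
        Finset.sum_le_sum fun j _ => lintegral_mono (hpiece j)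
    _ = ((k : ℝ≥0∞) ^ d)⁻¹ * ∑ j, quantCost nrm φ (c / k) (D j) := by
        simp only [hrescale, Finset.mul_sum]

theorem fNq_le_inv_mul_sum_quantCost (hd : 0 < d) (hnrm : IsNorm nrm)
    (hφ : MonotoneOn φ (Ici 0)) {k : ℕ} (hk : 0 < k) {N η : ℝ} (hN : 0 ≤ N) (hη : 0 < η)
    (D : (Fin d → Fin k) → Finset (Rd d)) (hD : ∀ j, (D j).Nonempty)
    (hcard : ∑ j, ((D j).card : ℝ) ≤ N) :
    fNq nrm φ N η
      ≤ ((k : ℝ≥0∞) ^ d)⁻¹ * ∑ j, quantCost nrm φ ((N / (η * k ^ d)) ^ (1 / (d : ℝ))) (D j) := by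
  have hscale : (N / η) ^ (1 / (d : ℝ)) / k = (N / (η * k ^ d)) ^ (1 / (d : ℝ)) := by
    rw [← div_div, Real.div_rpow (div_nonneg hN hη.le) (by positivity : (0 : ℝ) ≤ k ^ d),
      one_div, Real.pow_rpow_inv_natCast (Nat.cast_nonneg k) hd.ne']
  set C := Finset.univ.biUnion fun j => (D j).image (subcubeMap k j)
  have hCne : C.Nonempty :=
    (@Finset.univ_nonempty _ _ ⟨fun _ => ⟨0, hk⟩⟩).biUnion fun j _ => (hD j).image _
  have hCcard : (C.card : ℝ) ≤ N := by
    refine le_trans ?_ hcard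
    exact_mod_cast Finset.card_biUnion_le.trans
      (Finset.sum_le_sum fun j _ => Finset.card_image_le)
  rw [← hscale, fNq_eq_biInf]
  exact (iInf₂_le C ⟨hCne, hCcard⟩).trans
    (quantCost_biUnion_subcubeMap_le hnrm hφ hk (by positivity) D hD)

theorem fNq_le_weighted_quantCost (hd : 0 < d) (hnrm : IsNorm nrm)
    (hφ : MonotoneOn φ (Ici 0)) {k m : ℕ} (hk : 0 < k) (hm : m ≤ k ^ d)
    {N η N₁ N₂ : ℝ} (hN : 0 ≤ N) (hη : 0 < η) (hcard : ((k : ℝ) ^ d - m) * N₁ + m * N₂ ≤ N)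
    {C₁ C₂ : Finset (Rd d)} (hC₁ : m < k ^ d → C₁.Nonempty ∧ (C₁.card : ℝ) ≤ N₁)
    (hC₂ : 0 < m → C₂.Nonempty ∧ (C₂.card : ℝ) ≤ N₂) :
    fNq nrm φ N η
      ≤ ENNReal.ofReal (1 - m / (k : ℝ) ^ d) *
          quantCost nrm φ ((N / (η * k ^ d)) ^ (1 / (d : ℝ))) C₁ +
        ENNReal.ofReal (m / (k : ℝ) ^ d) *
          quantCost nrm φ ((N / (η * k ^ d)) ^ (1 / (d : ℝ))) C₂ := by
  classical
  have hM : (0 : ℝ) < (k : ℝ) ^ d := by positivity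
  have hcardJ : Fintype.card (Fin d → Fin k) = k ^ d := by simp
  have hrest : ((k ^ d - m : ℕ) : ℝ) = (k : ℝ) ^ d - m := by push_cast [Nat.cast_sub hm]; rfl
  obtain ⟨S, -, hS⟩ := Finset.exists_subset_card_eq
    (s := (Finset.univ : Finset (Fin d → Fin k))) (n := m) (by rwa [Finset.card_univ, hcardJ])
  set D : (Fin d → Fin k) → Finset (Rd d) := fun j => if j ∈ S then C₂ else C₁
  have hD : ∀ j, (D j).Nonempty := fun j => by
    by_cases hj : j ∈ S
    · simpa [D, hj] using (hC₂ (hS ▸ Finset.card_pos.mpr ⟨j, hj⟩)).1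
    · have hlt : m < k ^ d := hS ▸ hcardJ ▸ Finset.card_lt_univ_of_notMem hj
      simpa [D, hj] using (hC₁ hlt).1
  have hsum : ∀ {M : Type} [AddCommMonoid M] (g : Finset (Rd d) → M),
      ∑ j, g (D j) = (k ^ d - m) • g C₁ + m • g C₂ := fun g => by
    simp only [D, apply_ite g, Finset.sum_ite_mem_const, hcardJ, hS]
  have hDcard : ∑ j, ((D j).card : ℝ) ≤ N := by
    refine le_trans ?_ hcard
    rw [hsum (fun C => (C.card : ℝ)), nsmul_eq_mul, nsmul_eq_mul, hrest]
    gcongr ?_ + ?_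
    · rcases hm.lt_or_eq with hlt | heq
      · exact mul_le_mul_of_nonneg_left (hC₁ hlt).2 (by rw [← hrest]; positivity)
      · simp [heq]
    · rcases m.eq_zero_or_pos with h0 | hpos
      · simp [h0]
      · exact mul_le_mul_of_nonneg_left (hC₂ hpos).2 (Nat.cast_nonneg m)
  have hweight : ∀ p : ℕ, ENNReal.ofReal (p / (k : ℝ) ^ d) = p * ((k : ℝ≥0∞) ^ d)⁻¹ :=
    fun p => by
      rw [ENNReal.ofReal_div_of_pos hM, ENNReal.ofReal_natCast,
        ENNReal.ofReal_pow (Nat.cast_nonneg k), ENNReal.ofReal_natCast, div_eq_mul_inv]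
  have hrest_weight : 1 - m / (k : ℝ) ^ d = ((k ^ d - m : ℕ) : ℝ) / (k : ℝ) ^ d := by
    rw [hrest, sub_div, div_self hM.ne']
  calc fNq nrm φ N η
      ≤ ((k : ℝ≥0∞) ^ d)⁻¹ * ∑ j, quantCost nrm φ ((N / (η * k ^ d)) ^ (1 / (d : ℝ))) (D j) :=
        fNq_le_inv_mul_sum_quantCost hd hnrm hφ hk hN hη D hD hDcard
    _ = _ := by
        rw [hsum, nsmul_eq_mul, nsmul_eq_mul, hrest_weight, hweight, hweight]
        ring

theorem fNq_le_mixed (hd : 0 < d) (hnrm : IsNorm nrm) (hφ : MonotoneOn φ (Ici 0))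
    {k m : ℕ} (hk : 0 < k) (hm : m ≤ k ^ d) {N η N₁ η₁ N₂ η₂ : ℝ} (hN : 0 ≤ N) (hη : 0 < η)
    (h₁ : N₁ / η₁ = N / (η * k ^ d)) (h₂ : N₂ / η₂ = N / (η * k ^ d))
    (hcard : ((k : ℝ) ^ d - m) * N₁ + m * N₂ ≤ N) :
    fNq nrm φ N η ≤ ENNReal.ofReal (1 - m / (k : ℝ) ^ d) * fNq nrm φ N₁ η₁ +
      ENNReal.ofReal (m / (k : ℝ) ^ d) * fNq nrm φ N₂ η₂ := by
  have hM : (0 : ℝ) < (k : ℝ) ^ d := by positivity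
  rw [fNq_eq_biInf nrm φ N₁, fNq_eq_biInf nrm φ N₂, h₁, h₂]
  refine ENNReal.le_mul_biInf_add_mul_biInf ENNReal.ofReal_ne_top ENNReal.ofReal_ne_top
    fun C₁ C₂ hC₁ hC₂ => fNq_le_weighted_quantCost hd hnrm hφ hk hm hN hη hcard
      (fun h => hC₁ ?_) (fun h => hC₂ ?_)
  · rw [ne_eq, ENNReal.ofReal_eq_zero, not_le, sub_pos, div_lt_one hM]
    exact_mod_cast h
  · rw [ne_eq, ENNReal.ofReal_eq_zero, not_le]
    positivity

end Quantization

/-- Self-similarity inequality: for `M = k^d`, `η = αη₁ + βη₂`,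
`f_N(η) ≤ a(M) f_{N₁/M}(η₁) + b(M) f_{N₂/M}(η₂)` with `b(M) = ⌊βM⌋/M`, `a(M) = 1 - b(M)`,
`N₁ = (η₁/η)N`, `N₂ = (η₂/η)N`. -/
theorem statement7 {d : ℕ} (hd : 0 < d)
    (nrm : Rd d → ℝ) (hnrm : IsNorm nrm) (φ : ℝ → ℝ) (hφ : PhiOK φ)
    (k : ℕ) (hk : 0 < k) (η₁ η₂ α β N : ℝ)
    (hη₁ : 0 < η₁) (hη₁₂ : η₁ < η₂) (hα : 0 ≤ α) (hβ : 0 ≤ β) (hαβ : α + β = 1)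
    (hN : 1 ≤ N) :
    fNq nrm φ N (α * η₁ + β * η₂) ≤
      ENNReal.ofReal (1 - ((⌊β * ((k:ℝ)^d)⌋ : ℝ) / (k:ℝ)^d)) *
        fNq nrm φ ((η₁ / (α * η₁ + β * η₂)) * N / (k:ℝ)^d) η₁ +
      ENNReal.ofReal ((⌊β * ((k:ℝ)^d)⌋ : ℝ) / (k:ℝ)^d) *
        fNq nrm φ ((η₂ / (α * η₁ + β * η₂)) * N / (k:ℝ)^d) η₂ := by
  set η := α * η₁ + β * η₂
  have hM : (0 : ℝ) < (k : ℝ) ^ d := by positivity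
  have hη₂ : 0 < η₂ := hη₁.trans hη₁₂
  have hη_eq : η = η₁ + β * (η₂ - η₁) := by linear_combination η₁ * hαβ
  have hgap : 0 ≤ η₂ - η₁ := sub_nonneg.mpr hη₁₂.le
  have hη : 0 < η := hη_eq ▸ add_pos_of_pos_of_nonneg hη₁ (mul_nonneg hβ hgap)
  have hβM : 0 ≤ β * (k : ℝ) ^ d := by positivity
  rw [← natCast_floor_eq_intCast_floor hβM]
  set m := ⌊β * (k : ℝ) ^ d⌋₊
  have hm : m ≤ k ^ d := Nat.floor_le_of_le <| by
    rw [Nat.cast_pow]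
    exact mul_le_of_le_one_left hM.le (by linarith)
  have hcount : ((k : ℝ) ^ d - m) * η₁ + m * η₂ ≤ η * (k : ℝ) ^ d := by
    rw [hη_eq]
    linarith [mul_le_mul_of_nonneg_right (Nat.floor_le hβM) hgap]
  refine fNq_le_mixed hd hnrm hφ.1 hk hm (by linarith) hη (by field_simp) (by field_simp) ?_
  calc ((k : ℝ) ^ d - m) * (η₁ / η * N / (k : ℝ) ^ d) + m * (η₂ / η * N / (k : ℝ) ^ d)
      = (((k : ℝ) ^ d - m) * η₁ + m * η₂) / (η * (k : ℝ) ^ d) * N := by field_simp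
    _ ≤ 1 * N := by gcongr; exact (div_le_one (by positivity)).mpr hcount
    _ = N := one_mul N
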